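/- Let M = ⟨S, A, P, R, γ⟩ be a finite MDP with 1/2 < γ < 1, M̄ = ⟨S̄, A, P̄, R̄, γ⟩ a latent MDP over a finite metric space (S̄, d̄), φ : S → S̄ an encoder, and π̄ a latent policy. Let π_b be a baseline policy, C ∈ (1, 1/γ), and assume π̄∘φ ∈ N^C(π_b); let D = max{π̄(a|φ(s))/π_b(a|s) : s ∈ S, a ∈ supp π_b(·|s)} (so D ≤ C < 1/γ). Assume M and M̄ are episodic with initial state s_I, reset state s_reset, latent initial state s̄_I = φ(s_I), and latent reset state s̄_reset = φ(s_reset). Let ξ be a stationary distribution of π_b with ξ(s_reset) > 0. Assume the latent model has Lipschitz constants K_R̄, K_P̄ under π̄ with K_P̄ < 1/γ, and set K_V = K_R̄/(1 − γ·K_P̄). Then |J(π̄∘φ) − J̄(π̄)| ≤ (1/ξ(s_reset)) · (L_R/γ + K_V·L_P)/(1/D − γ), where 1/ξ(s_reset) equals the average episode length of π_b and L_R, L_P are the reward and transition losses with respect to ξ and π_b. -/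

import Mathlib

open Finset

variable {S A SL : Type*} [Fintype S] [Fintype A] [Fintype SL]

/-- A (stationary, stochastic) policy. -/
def IsPolicy {X : Type*} [Fintype X] (π : X → A → ℝ) : Prop :=
  ∀ x, (∀ a, 0 ≤ π x a) ∧ (∑ a, π x a) = 1

/-- The neighborhood `N^C(π)`. -/
def InNbhd (C : ℝ) (π π' : S → A → ℝ) : Prop :=
  IsPolicy π' ∧ (∀ s a, (0 < π s a ↔ 0 < π' s a)) ∧
    ∀ s a, 0 < π s a → (2 - C ≤ π' s a / π s a ∧ π' s a / π s a ≤ C)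

/-- The Wasserstein distance between two distributions on a finite metric
space (infimum of the expected distance over all couplings). -/
noncomputable def Wass [MetricSpace SL] (μ ν : SL → ℝ) : ℝ :=
  sInf { c : ℝ | ∃ lam : SL × SL → ℝ, (∀ p, 0 ≤ lam p) ∧
    (∀ x, (∑ y, lam (x, y)) = μ x) ∧ (∀ y, (∑ x, lam (x, y)) = ν y) ∧
    c = ∑ p : SL × SL, lam p * dist p.1 p.2 }


/-!
Write `g s = |V s - V̄ (φ s)|`. Subtracting the two Bellman equations, the one-step error of
action `a` at `s` is at most `e(s,a) = |R - R̄| + γ K_V W(φ♯P, P̄)`, because `V̄` is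
`K_V`-Lipschitz and Lipschitz test functions are controlled by the Wasserstein distance; hence
`g ≤ ∑ₐ π̄(a|φ s) (e(s,a) + γ P g)`. As `π̄ ∘ φ ≤ D π_b`, averaging over the stationary
distribution `ξ` of `π_b` absorbs the recursive term: `(1 - γD) ξ(g) ≤ D (L_R + γ K_V L_P)`.
Finally `ξ(s_reset) ≤ ξ(s_I)` since every step from the reset state goes to `s_I`, so
`ξ(s_reset) g(s_I) ≤ ξ(g)`.
-/

def IsDist {X : Type*} [Fintype X] (μ : X → ℝ) : Prop :=
  (∀ x, 0 ≤ μ x) ∧ ∑ x, μ x = 1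

def pushforward [DecidableEq SL] (φ : S → SL) (μ : S → ℝ) : SL → ℝ :=
  fun x => ∑ s, if φ s = x then μ s else 0

/-- The constant `D` of the paper. -/
noncomputable def maxRatio (π π' : S → A → ℝ)
    (hne : ((univ : Finset (S × A)).filter fun p => 0 < π p.1 p.2).Nonempty) : ℝ :=
  ((univ : Finset (S × A)).filter fun p => 0 < π p.1 p.2).sup' hne
    fun p => π' p.1 p.2 / π p.1 p.2

theorem abs_sum_mul_le_sum_mul_abs {ι : Type*} (s : Finset ι) {w f : ι → ℝ}
    (hw : ∀ i, 0 ≤ w i) : |∑ i ∈ s, w i * f i| ≤ ∑ i ∈ s, w i * |f i| :=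
  (abs_sum_le_sum_abs _ _).trans_eq <| sum_congr rfl fun i _ => by
    rw [abs_mul, abs_of_nonneg (hw i)]

theorem isDist_sum_mul {X : Type*} [Fintype X] {w : A → ℝ} (hw : IsDist w) {μ : A → X → ℝ}
    (hμ : ∀ a, IsDist (μ a)) : IsDist fun x => ∑ a, w a * μ a x := by
  refine ⟨fun x => sum_nonneg fun a _ => mul_nonneg (hw.1 a) ((hμ a).1 x), ?_⟩
  rw [sum_comm]
  simp_rw [← mul_sum, (hμ _).2, mul_one, hw.2]

theorem isDist_pushforward [DecidableEq SL] (φ : S → SL) {μ : S → ℝ} (hμ : IsDist μ) :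
    IsDist (pushforward φ μ) := by
  refine ⟨fun x => sum_nonneg fun s _ => ?_, ?_⟩
  · split_ifs
    exacts [hμ.1 s, le_rfl]
  · unfold pushforward
    rw [sum_comm]
    simp_rw [sum_ite_eq, mem_univ, if_true, hμ.2]

theorem sum_pushforward_mul [DecidableEq SL] (φ : S → SL) (μ : S → ℝ) (f : SL → ℝ) :
    ∑ x, pushforward φ μ x * f x = ∑ s, μ s * f (φ s) := by
  simp_rw [pushforward, sum_mul, ite_mul, zero_mul]
  rw [sum_comm]
  simp_rw [sum_ite_eq, mem_univ, if_true]

section Wasserstein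

variable [MetricSpace SL]

theorem wass_nonneg (μ ν : SL → ℝ) : 0 ≤ Wass μ ν := by
  apply Real.sInf_nonneg
  rintro c ⟨lam, hlam, -, -, rfl⟩
  exact sum_nonneg fun p _ => mul_nonneg (hlam p) dist_nonneg

/-- The easy half of Kantorovich–Rubinstein duality. -/
theorem abs_sum_mul_sub_sum_mul_le_mul_wass {μ ν : SL → ℝ} (hμ : IsDist μ) (hν : IsDist ν)
    {f : SL → ℝ} {L : ℝ} (hL : 0 ≤ L) (hf : ∀ x y, |f x - f y| ≤ L * dist x y) :
    |∑ x, μ x * f x - ∑ x, ν x * f x| ≤ L * Wass μ ν := by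
  have hcoupling : ∀ lam : SL × SL → ℝ, (∀ p, 0 ≤ lam p) → (∀ x, ∑ y, lam (x, y) = μ x) →
      (∀ y, ∑ x, lam (x, y) = ν y) →
      |∑ x, μ x * f x - ∑ x, ν x * f x| ≤ L * ∑ p : SL × SL, lam p * dist p.1 p.2 := by
    intro lam hlam hμm hνm
    have hμf : ∑ x, μ x * f x = ∑ p : SL × SL, lam p * f p.1 := by
      simp_rw [Fintype.sum_prod_type, ← hμm, sum_mul]
    have hνf : ∑ x, ν x * f x = ∑ p : SL × SL, lam p * f p.2 := by
      rw [Fintype.sum_prod_type, sum_comm]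
      simp_rw [← hνm, sum_mul]
    rw [hμf, hνf, ← sum_sub_distrib, mul_sum]
    simp_rw [← mul_sub]
    refine (abs_sum_mul_le_sum_mul_abs _ hlam).trans (sum_le_sum fun p _ => ?_)
    rw [mul_left_comm]
    exact mul_le_mul_of_nonneg_left (hf _ _) (hlam p)
  have hprod0 : ∀ p : SL × SL, 0 ≤ μ p.1 * ν p.2 := fun p => mul_nonneg (hμ.1 _) (hν.1 _)
  have hprodμ : ∀ x, ∑ y, μ x * ν y = μ x := fun x => by rw [← mul_sum, hν.2, mul_one]
  have hprodν : ∀ y, ∑ x, μ x * ν y = ν y := fun y => by rw [← sum_mul, hμ.2, one_mul]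
  rcases hL.eq_or_lt with rfl | hLpos
  · simpa using hcoupling _ hprod0 hprodμ hprodν
  rw [← div_le_iff₀' hLpos]
  refine le_csInf ⟨_, _, hprod0, hprodμ, hprodν, rfl⟩ ?_
  rintro c ⟨lam, hlam, hμm, hνm, rfl⟩
  exact (div_le_iff₀' hLpos).2 (hcoupling lam hlam hμm hνm)

end Wasserstein

section Neighborhood

variable {C : ℝ} {π π' : S → A → ℝ}
  {hne : ((univ : Finset (S × A)).filter fun p => 0 < π p.1 p.2).Nonempty}

theorem le_maxRatio_mul (hπ : ∀ s a, 0 ≤ π s a) (h : InNbhd C π π') (s : S) (a : A) :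
    π' s a ≤ maxRatio π π' hne * π s a := by
  by_cases hpos : 0 < π s a
  · rw [← div_le_iff₀ hpos]
    exact le_sup' (fun p : S × A => π' p.1 p.2 / π p.1 p.2)
      (mem_filter.2 ⟨mem_univ (s, a), hpos⟩)
  · have hzero : π s a = 0 := le_antisymm (not_lt.1 hpos) (hπ s a)
    have hzero' : π' s a = 0 :=
      le_antisymm (not_lt.1 fun h' => hpos ((h.2.1 s a).2 h')) ((h.1 s).1 a)
    rw [hzero, hzero', mul_zero]

theorem maxRatio_le (h : InNbhd C π π') : maxRatio π π' hne ≤ C :=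
  sup'_le _ _ fun p hp => (h.2.2 p.1 p.2 (mem_filter.1 hp).2).2

theorem maxRatio_pos (h : InNbhd C π π') : 0 < maxRatio π π' hne := by
  obtain ⟨p, hp⟩ := hne
  have hpos : 0 < π p.1 p.2 := (mem_filter.1 hp).2
  exact (div_pos ((h.2.1 p.1 p.2).1 hpos) hpos).trans_le
    (le_sup' (fun p : S × A => π' p.1 p.2 / π p.1 p.2) hp)

end Neighborhood

/-- On a finite space the best Lipschitz constant `L` of `f` is attained, so an a priori bound
`L ≤ a + b * L` valid for every Lipschitz constant turns into `L ≤ a / (1 - b)`. -/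
theorem abs_sub_le_of_lipschitz_self_bound {X : Type*} [Fintype X] [MetricSpace X] {f : X → ℝ}
    {a b : ℝ} (ha : 0 ≤ a) (hb : b < 1)
    (h : ∀ L, 0 ≤ L → (∀ x y, |f x - f y| ≤ L * dist x y) →
      ∀ x y, |f x - f y| ≤ (a + b * L) * dist x y) (x y : X) :
    |f x - f y| ≤ a / (1 - b) * dist x y := by
  set q : X × X → ℝ := fun p => |f p.1 - f p.2| / dist p.1 p.2
  obtain ⟨p, -, hp⟩ := exists_max_image univ q ⟨(x, x), mem_univ _⟩
  have hq0 : 0 ≤ q p := div_nonneg (abs_nonneg _) dist_nonneg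
  have hlip : ∀ x y, |f x - f y| ≤ q p * dist x y := by
    intro x y
    rcases eq_or_ne x y with rfl | hxy
    · simp
    · exact (div_le_iff₀ (dist_pos.2 hxy)).1 (hp (x, y) (mem_univ _))
  have hqp : q p ≤ a / (1 - b) := by
    rw [le_div_iff₀ (by linarith)]
    rcases eq_or_ne p.1 p.2 with hpp | hpp
    · simp [q, hpp, ha]
    · have hd := dist_pos.2 hpp
      have := h _ hq0 hlip p.1 p.2
      rw [← div_le_iff₀ hd] at this
      linarith
  exact (hlip x y).trans (mul_le_mul_of_nonneg_right hqp dist_nonneg)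

theorem sum_mul_add_mul_sum {X : Type*} [Fintype X] (w r : A → ℝ) (μ : A → X → ℝ)
    (f : X → ℝ) (γ : ℝ) :
    ∑ a, w a * (r a + γ * ∑ x, μ a x * f x) =
      ∑ a, w a * r a + γ * ∑ x, (∑ a, w a * μ a x) * f x := by
  simp_rw [mul_add, sum_add_distrib, mul_sum, sum_mul]
  rw [sum_comm]
  simp_rw [mul_sum]
  exact congrArg _ (sum_congr rfl fun x _ => sum_congr rfl fun a _ => by ring)

theorem latent_value_lipschitz [MetricSpace SL] {Pbar : SL → A → SL → ℝ}
    (hPbar : ∀ x a, IsDist (Pbar x a)) {Rbar : SL → A → ℝ} {πbar : SL → A → ℝ}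
    (hπbar : IsPolicy πbar) {γ KR KP : ℝ} (hγ : 0 ≤ γ) (hKR : 0 ≤ KR) (hγKP : γ * KP < 1)
    (hLipR : ∀ x₁ x₂ : SL,
      |(∑ a, πbar x₁ a * Rbar x₁ a) - (∑ a, πbar x₂ a * Rbar x₂ a)| ≤ KR * dist x₁ x₂)
    (hLipP : ∀ x₁ x₂ : SL,
      Wass (fun x' => ∑ a, πbar x₁ a * Pbar x₁ a x')
        (fun x' => ∑ a, πbar x₂ a * Pbar x₂ a x') ≤ KP * dist x₁ x₂)
    {Vbar : SL → ℝ}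
    (hVbar : ∀ x, Vbar x = ∑ a, πbar x a * (Rbar x a + γ * ∑ x', Pbar x a x' * Vbar x'))
    (x y : SL) : |Vbar x - Vbar y| ≤ KR / (1 - γ * KP) * dist x y := by
  refine abs_sub_le_of_lipschitz_self_bound hKR hγKP (fun L hL hlip x y => ?_) x y
  have htrans := abs_sum_mul_sub_sum_mul_le_mul_wass (isDist_sum_mul (hπbar x) (hPbar x))
    (isDist_sum_mul (hπbar y) (hPbar y)) hL hlip
  rw [hVbar x, hVbar y, sum_mul_add_mul_sum, sum_mul_add_mul_sum, add_sub_add_comm, ← mul_sub]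
  calc _ ≤ KR * dist x y + γ * (L * (KP * dist x y)) := by
        refine (abs_add_le _ _).trans (add_le_add (hLipR x y) ?_)
        rw [abs_mul, abs_of_nonneg hγ]
        exact mul_le_mul_of_nonneg_left (htrans.trans
          (mul_le_mul_of_nonneg_left (hLipP x y) hL)) hγ
    _ = (KR + γ * KP * L) * dist x y := by ring

theorem abs_value_sub_latent_le [MetricSpace SL] [DecidableEq SL] {P : S → A → S → ℝ}
    (hP : ∀ s a, IsDist (P s a)) {R : S → A → ℝ} {Pbar : SL → A → SL → ℝ}
    (hPbar : ∀ x a, IsDist (Pbar x a)) {Rbar : SL → A → ℝ} {φ : S → SL} {πbar : SL → A → ℝ}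
    (hπbar : IsPolicy πbar) {γ KV : ℝ} (hγ : 0 ≤ γ) (hKV : 0 ≤ KV) {V : S → ℝ} {Vbar : SL → ℝ}
    (hVbar_lip : ∀ x y, |Vbar x - Vbar y| ≤ KV * dist x y) {s : S}
    (hV : V s = ∑ a, πbar (φ s) a * (R s a + γ * ∑ s', P s a s' * V s'))
    (hVbar : Vbar (φ s) =
      ∑ a, πbar (φ s) a * (Rbar (φ s) a + γ * ∑ x', Pbar (φ s) a x' * Vbar x')) :
    |V s - Vbar (φ s)| ≤ ∑ a, πbar (φ s) a *
      (|R s a - Rbar (φ s) a| + γ * KV * Wass (pushforward φ (P s a)) (Pbar (φ s) a) +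
        γ * ∑ s', P s a s' * |V s' - Vbar (φ s')|) := by
  rw [hV, hVbar, ← sum_sub_distrib]
  simp_rw [← mul_sub]
  refine (abs_sum_mul_le_sum_mul_abs _ (hπbar (φ s)).1).trans
    (sum_le_sum fun a _ => mul_le_mul_of_nonneg_left ?_ ((hπbar (φ s)).1 a))
  have hsplit : ∑ s', P s a s' * V s' - ∑ x', Pbar (φ s) a x' * Vbar x' =
      ∑ s', P s a s' * (V s' - Vbar (φ s')) +
        (∑ x, pushforward φ (P s a) x * Vbar x - ∑ x', Pbar (φ s) a x' * Vbar x') := by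
    rw [sum_pushforward_mul]
    simp_rw [mul_sub, sum_sub_distrib]
    ring
  have hstay := abs_sum_mul_le_sum_mul_abs univ (f := fun s' => V s' - Vbar (φ s'))
    (hP s a).1
  have hmove := abs_sum_mul_sub_sum_mul_le_mul_wass (isDist_pushforward φ (hP s a))
    (hPbar (φ s) a) hKV hVbar_lip
  rw [add_sub_add_comm, ← mul_sub, hsplit]
  calc _ ≤ |R s a - Rbar (φ s) a| + γ * (|∑ s', P s a s' * (V s' - Vbar (φ s'))| +
        |∑ x, pushforward φ (P s a) x * Vbar x - ∑ x', Pbar (φ s) a x' * Vbar x'|) := by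
        grw [abs_add_le, abs_mul, abs_of_nonneg hγ, abs_add_le]
    _ ≤ _ := by grw [hstay, hmove]; linarith

section Stationary

variable {P : S → A → S → ℝ} {πb : S → A → ℝ} {ξ : S → ℝ}

theorem sum_stationary_mul_sum (hstat : ∀ s', ∑ s, ∑ a, ξ s * πb s a * P s a s' = ξ s')
    (u : S → ℝ) : ∑ s, ∑ a, ξ s * πb s a * ∑ s', P s a s' * u s' = ∑ s, ξ s * u s := by
  calc ∑ s, ∑ a, ξ s * πb s a * ∑ s', P s a s' * u s'
      = ∑ s, ∑ s', ∑ a, ξ s * πb s a * P s a s' * u s' := sum_congr rfl fun s _ => by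
        simp_rw [mul_sum, ← mul_assoc]
        exact sum_comm
    _ = ∑ s', (∑ s, ∑ a, ξ s * πb s a * P s a s') * u s' := by
        rw [sum_comm]
        simp_rw [sum_mul]
    _ = ∑ s, ξ s * u s := by simp_rw [hstat]

theorem one_sub_mul_sum_stationary_le (hP : ∀ s a, IsDist (P s a)) (hξ : ∀ s, 0 ≤ ξ s)
    (hstat : ∀ s', ∑ s, ∑ a, ξ s * πb s a * P s a s' = ξ s') {π' : S → A → ℝ} {D γ : ℝ}
    (hD : ∀ s a, π' s a ≤ D * πb s a) (hγ : 0 ≤ γ) {e : S → A → ℝ} (he : ∀ s a, 0 ≤ e s a)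
    {g : S → ℝ} (hg : ∀ s, 0 ≤ g s)
    (hbellman : ∀ s, g s ≤ ∑ a, π' s a * (e s a + γ * ∑ s', P s a s' * g s')) :
    (1 - γ * D) * ∑ s, ξ s * g s ≤ D * ∑ s, ∑ a, ξ s * πb s a * e s a := by
  have hdom : ∀ s, g s ≤ D * ∑ a, πb s a * (e s a + γ * ∑ s', P s a s' * g s') := by
    intro s
    refine (hbellman s).trans ?_
    rw [mul_sum]
    refine sum_le_sum fun a _ => ?_
    rw [← mul_assoc]
    have : 0 ≤ e s a + γ * ∑ s', P s a s' * g s' :=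
      add_nonneg (he s a)
        (mul_nonneg hγ (sum_nonneg fun s' _ => mul_nonneg ((hP s a).1 s') (hg s')))
    exact mul_le_mul_of_nonneg_right (hD s a) this
  set t : S → A → ℝ := fun s a => ∑ s', P s a s' * g s'
  have hstat_g : ∑ s, ∑ a, ξ s * πb s a * t s a = ∑ s, ξ s * g s := sum_stationary_mul_sum hstat g
  have havg : ∑ s, ξ s * g s ≤
      D * ∑ s, ∑ a, ξ s * πb s a * e s a + γ * D * ∑ s, ∑ a, ξ s * πb s a * t s a :=
    calc ∑ s, ξ s * g s ≤ ∑ s, ξ s * (D * ∑ a, πb s a * (e s a + γ * t s a)) :=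
          sum_le_sum fun s _ => mul_le_mul_of_nonneg_left (hdom s) (hξ s)
      _ = _ := by
          simp only [mul_add, mul_sum, sum_add_distrib]
          congr 1 <;> exact sum_congr rfl fun _ _ => sum_congr rfl fun _ _ => by ring
  rw [hstat_g] at havg
  linarith

theorem mul_le_sum_stationary_of_transition_eq_one (hP : ∀ s a, IsDist (P s a))
    (hπb : IsPolicy πb) (hξ : ∀ s, 0 ≤ ξ s)
    (hstat : ∀ s', ∑ s, ∑ a, ξ s * πb s a * P s a s' = ξ s') {s₀ s₁ : S}
    (hjump : ∀ a, P s₀ a s₁ = 1) {u : S → ℝ} (hu : ∀ s, 0 ≤ u s) :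
    ξ s₀ * u s₁ ≤ ∑ s, ξ s * u s := by
  have hrow : ξ s₀ = ∑ a, ξ s₀ * πb s₀ a * P s₀ a s₁ := by
    simp_rw [hjump, mul_one, ← mul_sum, (hπb s₀).2, mul_one]
  have hle : ξ s₀ ≤ ξ s₁ := by
    rw [← hstat s₁, hrow]
    exact single_le_sum (f := fun s => ∑ a, ξ s * πb s a * P s a s₁)
      (fun s _ => sum_nonneg fun a _ => mul_nonneg (mul_nonneg (hξ s) ((hπb s).1 a))
        ((hP s a).1 s₁)) (mem_univ s₀)
  exact (mul_le_mul_of_nonneg_right hle (hu s₁)).trans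
    (single_le_sum (f := fun s => ξ s * u s) (fun s _ => mul_nonneg (hξ s) (hu s)) (mem_univ s₁))

end Stationary

section Losses

variable (ξ : S → ℝ) (πb : S → A → ℝ) (P : S → A → S → ℝ) (R : S → A → ℝ)
  (Pbar : SL → A → SL → ℝ) (Rbar : SL → A → ℝ) (φ : S → SL)

def rewardLoss (R' : S → A → ℝ) : ℝ := ∑ s, ∑ a, ξ s * πb s a * |R s a - R' s a|

theorem rewardLoss_nonneg {ξ πb} (hξ : ∀ s, 0 ≤ ξ s) (hπb : IsPolicy πb) (R' : S → A → ℝ) :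
    0 ≤ rewardLoss ξ πb R R' :=
  sum_nonneg fun s _ => sum_nonneg fun a _ =>
    mul_nonneg (mul_nonneg (hξ s) ((hπb s).1 a)) (abs_nonneg _)

variable [MetricSpace SL] [DecidableEq SL]

noncomputable def transitionLoss : ℝ :=
  ∑ s, ∑ a, ξ s * πb s a * Wass (pushforward φ (P s a)) (Pbar (φ s) a)

variable {ξ πb}

theorem transitionLoss_nonneg (hξ : ∀ s, 0 ≤ ξ s) (hπb : IsPolicy πb) :
    0 ≤ transitionLoss ξ πb P Pbar φ :=
  sum_nonneg fun s _ => sum_nonneg fun a _ =>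
    mul_nonneg (mul_nonneg (hξ s) ((hπb s).1 a)) (wass_nonneg _ _)

variable {P R Pbar Rbar φ}

theorem one_sub_mul_sum_stationary_abs_value_sub_le (hP : ∀ s a, IsDist (P s a))
    (hPbar : ∀ x a, IsDist (Pbar x a)) {πbar : SL → A → ℝ} (hπbar : IsPolicy πbar)
    (hξ : ∀ s, 0 ≤ ξ s) (hstat : ∀ s', ∑ s, ∑ a, ξ s * πb s a * P s a s' = ξ s')
    {D : ℝ} (hD : ∀ s a, πbar (φ s) a ≤ D * πb s a) {γ KV : ℝ} (hγ : 0 ≤ γ) (hKV : 0 ≤ KV)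
    {V : S → ℝ} {Vbar : SL → ℝ} (hVbar_lip : ∀ x y, |Vbar x - Vbar y| ≤ KV * dist x y)
    (hV : ∀ s, V s = ∑ a, πbar (φ s) a * (R s a + γ * ∑ s', P s a s' * V s'))
    (hVbar : ∀ x, Vbar x = ∑ a, πbar x a * (Rbar x a + γ * ∑ x', Pbar x a x' * Vbar x')) :
    (1 - γ * D) * ∑ s, ξ s * |V s - Vbar (φ s)| ≤
      D * (rewardLoss ξ πb R (fun s a => Rbar (φ s) a) +
        γ * KV * transitionLoss ξ πb P Pbar φ) := by
  have hloss : ∑ s, ∑ a, ξ s * πb s a * (|R s a - Rbar (φ s) a| +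
      γ * KV * Wass (pushforward φ (P s a)) (Pbar (φ s) a)) =
      rewardLoss ξ πb R (fun s a => Rbar (φ s) a) + γ * KV * transitionLoss ξ πb P Pbar φ := by
    simp only [rewardLoss, transitionLoss, mul_add, sum_add_distrib, mul_sum]
    exact congrArg _ (sum_congr rfl fun _ _ => sum_congr rfl fun _ _ => by ring)
  rw [← hloss]
  exact one_sub_mul_sum_stationary_le (π' := fun s a => πbar (φ s) a)
    (g := fun s => |V s - Vbar (φ s)|)
    (e := fun s a => |R s a - Rbar (φ s) a| + γ * KV * Wass (pushforward φ (P s a)) (Pbar (φ s) a))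
    hP hξ hstat hD hγ
    (fun s a => add_nonneg (abs_nonneg _) (mul_nonneg (mul_nonneg hγ hKV) (wass_nonneg _ _)))
    (fun s => abs_nonneg _)
    (fun s => abs_value_sub_latent_le hP hPbar hπbar hγ hKV hVbar_lip (hV s) (hVbar (φ s)))

end Losses

theorem le_div_one_div_sub_of_one_sub_mul_le {D γ G X : ℝ} (hD : 0 < D) (hγD : γ * D < 1)
    (h : (1 - γ * D) * G ≤ D * X) : G ≤ X / (1 / D - γ) := by
  rw [show 1 / D - γ = (1 - γ * D) / D by field_simp, le_div_iff₀ (by bound),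
    mul_div_assoc', div_le_iff₀ hD]
  linarith

theorem value_bound_general
    [MetricSpace SL] [DecidableEq SL]
    (P : S → A → S → ℝ)
    (hP : ∀ s a, (∀ s', 0 ≤ P s a s') ∧ (∑ s', P s a s') = 1)
    (R : S → A → ℝ) (γ : ℝ) (hγ : 1 / 2 < γ ∧ γ < 1)
    (Pbar : SL → A → SL → ℝ)
    (hPbar : ∀ x a, (∀ x', 0 ≤ Pbar x a x') ∧ (∑ x', Pbar x a x') = 1)
    (Rbar : SL → A → ℝ)
    (φ : S → SL)
    (πbar : SL → A → ℝ) (hπbar : IsPolicy πbar)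
    (πb : S → A → ℝ) (hπb : IsPolicy πb)
    (C : ℝ) (hC : 1 < C ∧ C < 1 / γ)
    (hmem : InNbhd C πb (fun s a => πbar (φ s) a))
    (hne : ((Finset.univ : Finset (S × A)).filter (fun p => 0 < πb p.1 p.2)).Nonempty)
    (D : ℝ)
    (hD : D = ((Finset.univ : Finset (S × A)).filter (fun p => 0 < πb p.1 p.2)).sup' hne
      (fun p => πbar (φ p.1) p.2 / πb p.1 p.2))
    (sI sreset : S)
    (hepisP : ∀ a, P sreset a sI = 1)
    (ξ : S → ℝ) (hξ : (∀ s, 0 ≤ ξ s) ∧ (∑ s, ξ s) = 1)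
    (hstat : ∀ s', (∑ s, ∑ a, ξ s * πb s a * P s a s') = ξ s')
    (hξreset : 0 < ξ sreset)
    (KR KP : ℝ) (hKR0 : 0 ≤ KR) (hKP : KP < 1 / γ)
    (hLipR : ∀ x₁ x₂ : SL,
      |(∑ a, πbar x₁ a * Rbar x₁ a) - (∑ a, πbar x₂ a * Rbar x₂ a)| ≤ KR * dist x₁ x₂)
    (hLipP : ∀ x₁ x₂ : SL,
      Wass (fun x' => ∑ a, πbar x₁ a * Pbar x₁ a x')
        (fun x' => ∑ a, πbar x₂ a * Pbar x₂ a x') ≤ KP * dist x₁ x₂)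
    (KV : ℝ) (hKV : KV = KR / (1 - γ * KP))
    (V : S → ℝ)
    (hV : ∀ s, V s = ∑ a, πbar (φ s) a * (R s a + γ * ∑ s', P s a s' * V s'))
    (Vbar : SL → ℝ)
    (hVbar : ∀ x, Vbar x = ∑ a, πbar x a * (Rbar x a + γ * ∑ x', Pbar x a x' * Vbar x'))
    (LR LP : ℝ)
    (hLR : LR = ∑ s, ∑ a, ξ s * πb s a * |R s a - Rbar (φ s) a|)
    (hLP : LP = ∑ s, ∑ a, ξ s * πb s a *
      Wass (fun x => ∑ s', if φ s' = x then P s a s' else 0) (Pbar (φ s) a)) :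
    |V sI - Vbar (φ sI)| ≤
      (1 / ξ sreset) * ((LR / γ + KV * LP) / (1 / D - γ)) := by
  obtain ⟨hγ2, hγ1⟩ := hγ
  have hγ0 : 0 < γ := by linarith
  have hDeq : D = maxRatio πb (fun s a => πbar (φ s) a) hne := hD
  have hD0 : 0 < D := hDeq ▸ maxRatio_pos hmem
  have hγD : γ * D < 1 := calc
    γ * D ≤ γ * C := mul_le_mul_of_nonneg_left (hDeq ▸ maxRatio_le hmem) hγ0.le
    _ < 1 := (lt_div_iff₀' hγ0).1 hC.2
  have hγKP : γ * KP < 1 := (lt_div_iff₀' hγ0).1 hKP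
  have hKV0 : 0 ≤ KV := hKV ▸ div_nonneg hKR0 (by linarith)
  have hlip : ∀ x y, |Vbar x - Vbar y| ≤ KV * dist x y :=
    hKV ▸ latent_value_lipschitz hPbar hπbar hγ0.le hKR0 hγKP hLipR hLipP hVbar
  have hdom : ∀ s a, πbar (φ s) a ≤ D * πb s a := by
    rw [hDeq]; exact le_maxRatio_mul (fun s => (hπb s).1) hmem
  have havg : (1 - γ * D) * ∑ s, ξ s * |V s - Vbar (φ s)| ≤ D * (LR + γ * KV * LP) := by
    rw [hLR, hLP]
    exact one_sub_mul_sum_stationary_abs_value_sub_le hP hPbar hπbar hξ.1 hstat hdom hγ0.le hKV0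
      hlip hV hVbar
  have hLR0 : 0 ≤ LR := hLR ▸ rewardLoss_nonneg R hξ.1 hπb _
  have hLP0 : 0 ≤ LP := hLP ▸ transitionLoss_nonneg P Pbar φ hξ.1 hπb
  have hloss_le : LR + γ * KV * LP ≤ LR / γ + KV * LP := by
    rw [mul_assoc]
    exact add_le_add (le_div_self hLR0 hγ0 hγ1.le) (mul_le_of_le_one_left (by positivity) hγ1.le)
  have hgap : 0 < 1 / D - γ := by rw [sub_pos, lt_div_iff₀ hD0]; linarith
  calc |V sI - Vbar (φ sI)| ≤ 1 / ξ sreset * ∑ s, ξ s * |V s - Vbar (φ s)| := by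
        rw [one_div_mul_eq_div, le_div_iff₀' hξreset]
        exact mul_le_sum_stationary_of_transition_eq_one hP hπb hξ.1 hstat hepisP
          (u := fun s => |V s - Vbar (φ s)|) fun s => abs_nonneg _
    _ ≤ 1 / ξ sreset * ((LR + γ * KV * LP) / (1 / D - γ)) := by
        gcongr; exact le_div_one_div_sub_of_one_sub_mul_le hD0 hγD havg
    _ ≤ 1 / ξ sreset * ((LR / γ + KV * LP) / (1 / D - γ)) := by gcongr

/-- Theorem 2, value-gap/world-model-quality bound: in the
episodic setting, the gap between the return of `π̄∘φ` in the environment and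
the return of `π̄` in the world model is bounded by the local losses measured
under the baseline policy, scaled by the average episode length
`1/ξ(s_reset)` and by `1/(1/D − γ)`. -/
theorem value_bound
    [Nonempty S] [Nonempty A] [Nonempty SL] [MetricSpace SL] [DecidableEq SL]
    (P : S → A → S → ℝ)
    (hP : ∀ s a, (∀ s', 0 ≤ P s a s') ∧ (∑ s', P s a s') = 1)
    (R : S → A → ℝ) (γ : ℝ) (hγ : 1 / 2 < γ ∧ γ < 1)
    (Pbar : SL → A → SL → ℝ)
    (hPbar : ∀ x a, (∀ x', 0 ≤ Pbar x a x') ∧ (∑ x', Pbar x a x') = 1)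
    (Rbar : SL → A → ℝ)
    (φ : S → SL)
    (πbar : SL → A → ℝ) (hπbar : IsPolicy πbar)
    (πb : S → A → ℝ) (hπb : IsPolicy πb)
    (C : ℝ) (hC : 1 < C ∧ C < 1 / γ)
    (hmem : InNbhd C πb (fun s a => πbar (φ s) a))
    (hne : ((Finset.univ : Finset (S × A)).filter (fun p => 0 < πb p.1 p.2)).Nonempty)
    (D : ℝ)
    (hD : D = ((Finset.univ : Finset (S × A)).filter (fun p => 0 < πb p.1 p.2)).sup' hne
      (fun p => πbar (φ p.1) p.2 / πb p.1 p.2))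
    (sI sreset : S)
    (hepisR : ∀ a, R sreset a = 0)
    (hepisP : ∀ a, P sreset a sI = 1)
    (hepisRbar : ∀ a, Rbar (φ sreset) a = 0)
    (hepisPbar : ∀ a, Pbar (φ sreset) a (φ sI) = 1)
    (hφreset : ∀ s, φ s = φ sreset ↔ s = sreset)
    (ξ : S → ℝ) (hξ : (∀ s, 0 ≤ ξ s) ∧ (∑ s, ξ s) = 1)
    (hstat : ∀ s', (∑ s, ∑ a, ξ s * πb s a * P s a s') = ξ s')
    (hξreset : 0 < ξ sreset)
    (KR KP : ℝ) (hKR0 : 0 ≤ KR) (hKP0 : 0 ≤ KP) (hKP : KP < 1 / γ)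
    (hLipR : ∀ x₁ x₂ : SL,
      |(∑ a, πbar x₁ a * Rbar x₁ a) - (∑ a, πbar x₂ a * Rbar x₂ a)| ≤ KR * dist x₁ x₂)
    (hLipP : ∀ x₁ x₂ : SL,
      Wass (fun x' => ∑ a, πbar x₁ a * Pbar x₁ a x')
        (fun x' => ∑ a, πbar x₂ a * Pbar x₂ a x') ≤ KP * dist x₁ x₂)
    (KV : ℝ) (hKV : KV = KR / (1 - γ * KP))
    (V : S → ℝ)
    (hV : ∀ s, V s = ∑ a, πbar (φ s) a * (R s a + γ * ∑ s', P s a s' * V s'))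
    (Vbar : SL → ℝ)
    (hVbar : ∀ x, Vbar x = ∑ a, πbar x a * (Rbar x a + γ * ∑ x', Pbar x a x' * Vbar x'))
    (LR LP : ℝ)
    (hLR : LR = ∑ s, ∑ a, ξ s * πb s a * |R s a - Rbar (φ s) a|)
    (hLP : LP = ∑ s, ∑ a, ξ s * πb s a *
      Wass (fun x => ∑ s', if φ s' = x then P s a s' else 0) (Pbar (φ s) a)) :
    |V sI - Vbar (φ sI)| ≤
      (1 / ξ sreset) * ((LR / γ + KV * LP) / (1 / D - γ)) :=
  value_bound_general P hP R γ hγ Pbar hPbar Rbar φ πbar hπbar πb hπb C hC hmem hne D hD sI sreset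
    hepisP ξ hξ hstat hξreset KR KP hKR0 hKP hLipR hLipP KV hKV V hV Vbar hVbar LR LP hLR hLP
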